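/- Let γ : I → ℝ³ be a unit-speed curve with Frenet frame {T, N, B}, curvature κ > 0 and torsion τ, and let ξ ∈ ℝ³ be a fixed vector. Then γ satisfies the magnetic equation T'(s) = ξ × T(s) for all s if and only if ξ has the form ξ = w·T(s) + κ(s)·B(s) for all s, for some function w, with the component of ξ along N identically zero; in particular ⟨ξ, N(s)⟩ = 0 and ⟨ξ, B(s)⟩ = κ(s) for all s. -/

import Mathlib

set_option linter.unreachableTactic false
set_option linter.unusedTactic false
set_option maxHeartbeats 1000000
open scoped RealInnerProductSpace

noncomputable def cross3 (x y : EuclideanSpace ℝ (Fin 3)) : EuclideanSpace ℝ (Fin 3) :=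
  WithLp.toLp 2 (crossProduct (x : Fin 3 → ℝ) y)

lemma inner3 (x y : EuclideanSpace ℝ (Fin 3)) :
    ⟪x, y⟫ = x 0 * y 0 + x 1 * y 1 + x 2 * y 2 := by
  simp [PiLp.inner_apply, Fin.sum_univ_three]; ring

lemma cross3_smul (a : ℝ) (x y : EuclideanSpace ℝ (Fin 3)) :
    cross3 (a • x) y = a • cross3 x y := by
  ext i; fin_cases i <;> simp [cross3, cross_apply, Fin.sum_univ_three] <;> ring

lemma cross3_sub (x y z : EuclideanSpace ℝ (Fin 3)) :
    cross3 (x - y) z = cross3 x z - cross3 y z := by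
  ext i; fin_cases i <;> simp [cross3, cross_apply, Fin.sum_univ_three] <;> ring

lemma cross3_add (x y z : EuclideanSpace ℝ (Fin 3)) :
    cross3 (x + y) z = cross3 x z + cross3 y z := by
  ext i; fin_cases i <;> simp [cross3, cross_apply, Fin.sum_univ_three] <;> ring

lemma cross3_self (x : EuclideanSpace ℝ (Fin 3)) : cross3 x x = 0 := by
  ext i; fin_cases i <;> simp [cross3, cross_apply] <;> ring

lemma cross3_cross_right (t n : EuclideanSpace ℝ (Fin 3)) :
    cross3 (cross3 t n) t = ⟪t, t⟫ • n - ⟪n, t⟫ • t := by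
  rw [inner3, inner3]; ext i; fin_cases i <;>
    simp [cross3, cross_apply, inner3, Fin.sum_univ_three, smul_eq_mul] <;> ring

lemma cross3_cross_left (t n : EuclideanSpace ℝ (Fin 3)) :
    cross3 t (cross3 t n) = ⟪t, n⟫ • t - ⟪t, t⟫ • n := by
  rw [inner3, inner3]; ext i; fin_cases i <;>
    simp [cross3, cross_apply, inner3, Fin.sum_univ_three, smul_eq_mul] <;> ring

lemma scalar_triple (x t n : EuclideanSpace ℝ (Fin 3)) :
    ⟪cross3 x t, n⟫ = ⟪x, cross3 t n⟫ := by
  simp [inner3, cross3, cross_apply, Fin.sum_univ_three]; ring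

lemma cross3_inner_left (t n : EuclideanSpace ℝ (Fin 3)) : ⟪cross3 t n, t⟫ = 0 := by
  simp [inner3, cross3, cross_apply, Fin.sum_univ_three]; ring

lemma cross3_inner_right (t n : EuclideanSpace ℝ (Fin 3)) : ⟪cross3 t n, n⟫ = 0 := by
  simp [inner3, cross3, cross_apply, Fin.sum_univ_three]; ring

lemma key_zero (t x : EuclideanSpace ℝ (Fin 3)) (h1 : ⟪t, t⟫ = 1)
    (h2 : cross3 x t = 0) (h3 : ⟪x, t⟫ = 0) : x = 0 := by
  rw [inner3] at h1 h3
  have e0 := congrFun (congrArg WithLp.ofLp h2) 0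
  have e1 := congrFun (congrArg WithLp.ofLp h2) 1
  have e2 := congrFun (congrArg WithLp.ofLp h2) 2
  simp [cross3, cross_apply] at e0 e1 e2
  ext i; fin_cases i
  · show x 0 = 0
    linear_combination -x 0 * h1 + t 0 * h3 - t 2 * e1 + t 1 * e2
  · show x 1 = 0
    linear_combination -x 1 * h1 + t 1 * h3 + t 2 * e0 - t 0 * e2
  · show x 2 = 0
    linear_combination -x 2 * h1 + t 2 * h3 - t 1 * e0 + t 0 * e1

theorem stmt_18 (a b : ℝ) (hab : a < b)
    (γ : ℝ → EuclideanSpace ℝ (Fin 3)) (ξ : EuclideanSpace ℝ (Fin 3))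
    (T N B : ℝ → EuclideanSpace ℝ (Fin 3)) (κ : ℝ → ℝ)
    (hγ : ContDiff ℝ (⊤ : ℕ∞) γ)
    (hT : ∀ s, T s = deriv γ s)
    (hunit : ∀ s ∈ Set.Ioo a b, ‖T s‖ = 1)
    (hκ : ∀ s, κ s = ‖deriv T s‖)
    (hκpos : ∀ s ∈ Set.Ioo a b, 0 < κ s)
    (hN : ∀ s, N s = (κ s)⁻¹ • deriv T s)
    (hB : ∀ s, B s = cross3 (T s) (N s)) :
    ((∀ s ∈ Set.Ioo a b, deriv T s = cross3 ξ (T s)) ↔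
      (∃ w : ℝ → ℝ, ∀ s ∈ Set.Ioo a b, ξ = w s • T s + κ s • B s)) ∧
    ((∀ s ∈ Set.Ioo a b, deriv T s = cross3 ξ (T s)) →
      ∀ s ∈ Set.Ioo a b, ⟪ξ, N s⟫ = 0 ∧ ⟪ξ, B s⟫ = κ s) := by
  have hTe : T = deriv γ := funext hT
  have hTd : Differentiable ℝ T := by
    rw [hTe]
    have hγ' : ContDiff ℝ (⊤ : ℕ∞) γ := hγ.of_le (by simp)
    exact (contDiff_infty_iff_deriv.mp hγ').2.differentiable (by simp)
  -- basic orthonormality facts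
  have hTT : ∀ s ∈ Set.Ioo a b, ⟪T s, T s⟫ = 1 := by
    intro s hs
    rw [real_inner_self_eq_norm_mul_norm, hunit s hs]; norm_num
  have hTT' : ∀ s ∈ Set.Ioo a b, ⟪T s, deriv T s⟫ = 0 := by
    intro s hs
    have h1 : HasDerivAt (fun t => ⟪T t, T t⟫)
        (⟪T s, deriv T s⟫ + ⟪deriv T s, T s⟫) s :=
      (hTd s).hasDerivAt.inner ℝ (hTd s).hasDerivAt
    have h2 : (fun t => ⟪T t, T t⟫) =ᶠ[nhds s] fun _ => (1 : ℝ) := by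
      filter_upwards [isOpen_Ioo.mem_nhds hs] with t ht using hTT t ht
    have h3 : HasDerivAt (fun t => ⟪T t, T t⟫) 0 s :=
      (hasDerivAt_const s (1 : ℝ)).congr_of_eventuallyEq h2
    have h4 := h1.unique h3
    have hc := real_inner_comm (deriv T s) (T s)
    linarith
  have hκne : ∀ s ∈ Set.Ioo a b, κ s ≠ 0 := fun s hs => ne_of_gt (hκpos s hs)
  have hDT : ∀ s ∈ Set.Ioo a b, deriv T s = κ s • N s := by
    intro s hs
    rw [hN, smul_smul, mul_inv_cancel₀ (hκne s hs), one_smul]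
  have hNT : ∀ s ∈ Set.Ioo a b, ⟪N s, T s⟫ = 0 := by
    intro s hs
    rw [hN, real_inner_smul_left, real_inner_comm, hTT' s hs, mul_zero]
  have hNN : ∀ s ∈ Set.Ioo a b, ⟪N s, N s⟫ = 1 := by
    intro s hs
    have : ‖N s‖ = 1 := by
      rw [hN, norm_smul, ← hκ s, Real.norm_eq_abs, abs_inv,
        abs_of_pos (hκpos s hs), inv_mul_cancel₀ (hκne s hs)]
    rw [real_inner_self_eq_norm_mul_norm, this]; norm_num
  have hBT : ∀ s, ⟪B s, T s⟫ = 0 := fun s => by rw [hB]; exact cross3_inner_left _ _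
  have hBN : ∀ s, ⟪B s, N s⟫ = 0 := fun s => by rw [hB]; exact cross3_inner_right _ _
  have hcrossBT : ∀ s ∈ Set.Ioo a b, cross3 (B s) (T s) = N s := by
    intro s hs
    rw [hB, cross3_cross_right, hTT s hs, hNT s hs, one_smul, zero_smul, sub_zero]
  -- second part
  have hsecond : (∀ s ∈ Set.Ioo a b, deriv T s = cross3 ξ (T s)) →
      ∀ s ∈ Set.Ioo a b, ⟪ξ, N s⟫ = 0 ∧ ⟪ξ, B s⟫ = κ s := by
    intro hmag s hs
    constructor
    · have hTB : cross3 (T s) (B s) = -N s := by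
        rw [hB, cross3_cross_left, real_inner_comm, hNT s hs, hTT s hs, zero_smul,
          one_smul, zero_sub]
      have : ⟪ξ, cross3 (T s) (B s)⟫ = ⟪cross3 ξ (T s), B s⟫ := (scalar_triple _ _ _).symm
      rw [hTB, ← hmag s hs, hDT s hs, real_inner_smul_left] at this
      have hNB : ⟪N s, B s⟫ = (0:ℝ) := by rw [real_inner_comm]; exact hBN s
      rw [inner_neg_right, hNB, mul_zero] at this
      linarith
    · have : ⟪ξ, B s⟫ = ⟪cross3 ξ (T s), N s⟫ := by
        rw [scalar_triple, hB]
      rw [← hmag s hs, hDT s hs, real_inner_smul_left, hNN s hs, mul_one] at this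
      exact this
  refine ⟨⟨fun hmag => ?_, fun ⟨w, hw⟩ s hs => ?_⟩, hsecond⟩
  · refine ⟨fun s => ⟪ξ, T s⟫, fun s hs => ?_⟩
    have hη : ξ - (⟪ξ, T s⟫ • T s + κ s • B s) = 0 := by
      apply key_zero (T s) _ (hTT s hs)
      · rw [cross3_sub, cross3_add, cross3_smul, cross3_smul, cross3_self,
          hcrossBT s hs, smul_zero, zero_add, ← hDT s hs, ← hmag s hs, sub_self]
      · rw [inner_sub_left, inner_add_left, real_inner_smul_left, real_inner_smul_left,
          hTT s hs, hBT s, mul_one, mul_zero, add_zero, sub_self]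
    exact (sub_eq_zero.mp hη)
  · rw [hw s hs, cross3_add, cross3_smul, cross3_smul, cross3_self, smul_zero, zero_add,
      hcrossBT s hs, hDT s hs]
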